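/- For every α : Finset Q there exists a tolerable α' : Finset Q with α Δ α' ∈ Z_X(S) (i.e. α' has the same syndrome as α); moreover, if α and α' are both tolerable and α Δ α' ∈ Z_X(S), then α Δ α' ∈ S_X. (For every X-error syndrome there exists exactly one class, up to stabilizers, of tolerable errors with that syndrome; hence tolerable errors form a set of correctable errors.) -/

import Mathlib

/-!
Fix a logical `X` operator `β₀` with `α ∩ β₀ ∈ Z_Z`: one exists by the Fredholm alternative
over `𝔽₂`, because `α ∩ b` is a stabilizer whenever `b ∈ S_X` and `α ∩ b ∈ Z_Z`. Then `α` is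
tolerable iff `α ∩ β₀ ∈ S_Z`. Replacing `α` by `α ∆ δ` with `δ ∈ Z_X` changes `α ∩ β₀` by
`δ ∩ β₀`, which is a stabilizer if `δ ∈ S_X` and a logical `Z` operator otherwise; as `Z_Z / S_Z`
has two elements, this gives both existence and uniqueness.
-/

open Finset
open scoped symmDiff Matrix

namespace CC

variable {Q : Type*} [Fintype Q] [DecidableEq Q]

/-- A subgroup of the abelian group `(Finset Q, ∆)`. -/
def IsSubgroup (S : Set (Finset Q)) : Prop :=
  ∅ ∈ S ∧ ∀ a ∈ S, ∀ b ∈ S, a ∆ b ∈ S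

/-- The subgroup of `(Finset Q, ∆)` generated by a set. -/
def closure (T : Set (Finset Q)) : Set (Finset Q) :=
  ⋂₀ {S : Set (Finset Q) | IsSubgroup S ∧ T ⊆ S}

/-- A CSS stabilizer code on the qubits `Q`. -/
structure CSS (Q : Type*) [Fintype Q] [DecidableEq Q] where
  SX : Set (Finset Q)
  SZ : Set (Finset Q)
  hSX : IsSubgroup SX
  hSZ : IsSubgroup SZ
  comm : ∀ a ∈ SZ, ∀ b ∈ SX, 2 ∣ (a ∩ b).card

def ZX (C : CSS Q) : Set (Finset Q) := {γ | ∀ f ∈ C.SZ, 2 ∣ (γ ∩ f).card}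

def ZZ (C : CSS Q) : Set (Finset Q) := {z | ∀ c ∈ C.SX, 2 ∣ (z ∩ c).card}

/-- Duality assumption. -/
def Dual (C : CSS Q) : Prop :=
  C.SZ = {z | ∀ γ ∈ ZX C, 2 ∣ (z ∩ γ).card} ∧
  C.SX = {c | ∀ z ∈ ZZ C, 2 ∣ (c ∩ z).card}

def LogicalX (C : CSS Q) (l : Finset Q) : Prop := l ∈ ZX C ∧ l ∉ C.SX

def LogicalZ (C : CSS Q) (l : Finset Q) : Prop := l ∈ ZZ C ∧ l ∉ C.SZ

/-- Single-logical-qubit assumption. -/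
def SingleQubit (C : CSS Q) : Prop :=
  (ZX C ≠ C.SX ∧ ∀ l l', LogicalX C l → LogicalX C l' → l ∆ l' ∈ C.SX) ∧
  (ZZ C ≠ C.SZ ∧ ∀ l l', LogicalZ C l → LogicalZ C l' → l ∆ l' ∈ C.SZ)

/-- Intersection axiom. -/
def Inter (C : CSS Q) : Prop :=
  ZZ C = {x | ∃ α ∈ ZX C, ∃ β ∈ ZX C, x = α ∩ β}

def G (C : CSS Q) (α : Finset Q) : Set (Finset Q) :=
  closure (C.SZ ∪ {x | ∃ β ∈ ZX C, x = α ∩ β})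

def H (C : CSS Q) (α : Finset Q) : Set (Finset Q) :=
  closure (C.SZ ∪ {x | ∃ β ∈ C.SX, x = α ∩ β})

def Zof (K : Set (Finset Q)) : Set (Finset Q) := {γ | ∀ h ∈ K, 2 ∣ (γ ∩ h).card}

def Tolerable (C : CSS Q) (α : Finset Q) : Prop := ∀ z ∈ G C α, ¬ LogicalZ C z

def g (b : Q → ℤ) (s : Finset Q) : ℤ := ∑ q ∈ s, b q

/-- T-invariance assumption. -/
def TInv (C : CSS Q) (b : Q → ℤ) : Prop :=
  (∀ β ∈ C.SX, (8 : ℤ) ∣ g b β) ∧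
  (∀ β ∈ C.SX, ∀ γ ∈ ZX C, (8 : ℤ) ∣ (g b β - 2 * g b (γ ∩ β)))

def E (C : CSS Q) (b : Q → ℤ) (α : Finset Q) : Set (Finset Q) :=
  {z | ∀ γ ∈ Zof (G C α), g b (γ ∩ α) ≡ 2 * ((z ∩ γ).card : ℤ) [ZMOD 4]}

/- Quantum setting -/

abbrev M (Q : Type*) [Fintype Q] [DecidableEq Q] :=
  Matrix (Q → ZMod 2) (Q → ZMod 2) ℂ

def supp (v : Q → ZMod 2) : Finset Q := Finset.univ.filter (fun q => v q = 1)

def ind (α : Finset Q) : Q → ZMod 2 := fun q => if q ∈ α then 1 else 0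

def XM (α : Finset Q) : M Q :=
  Matrix.of fun u v => if u = v + ind α then (1 : ℂ) else 0

noncomputable def ZM (α : Finset Q) : M Q :=
  Matrix.diagonal fun v => (-1 : ℂ) ^ (supp v ∩ α).card

noncomputable def AM (b : Q → ℤ) (α : Finset Q) : M Q :=
  Matrix.diagonal fun v => Complex.I ^ (g b (α ∩ supp v))

noncomputable def UM (b : Q → ℤ) : M Q :=
  Matrix.diagonal fun v => Complex.exp (Real.pi * Complex.I / 4) ^ (g b (supp v))

def Encoded (C : CSS Q) (ρ : M Q) : Prop :=
  ρ.trace = 1 ∧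
  (∀ c ∈ C.SX, XM c * ρ = ρ ∧ ρ * XM c = ρ) ∧
  (∀ f ∈ C.SZ, ZM f * ρ = ρ ∧ ρ * ZM f = ρ)

instance : Std.Commutative (α := Finset Q) (· ∆ ·) := ⟨symmDiff_comm⟩
instance : Std.Associative (α := Finset Q) (· ∆ ·) := ⟨symmDiff_assoc⟩

/-- Iterated symmetric difference over a finite index set. -/
def bigΔ {ι : Type*} (s : Finset ι) (f : ι → Finset Q) : Finset Q :=
  s.fold (· ∆ ·) ∅ f

theorem _root_.Finset.inter_symmDiff_distrib_left {α : Type*} [DecidableEq α] (s t u : Finset α) :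
    s ∩ t ∆ u = (s ∩ t) ∆ (s ∩ u) :=
  inf_symmDiff_distrib_left s t u

theorem _root_.Finset.inter_symmDiff_distrib_right {α : Type*} [DecidableEq α]
    (s t u : Finset α) : s ∆ t ∩ u = (s ∩ u) ∆ (t ∩ u) :=
  inf_symmDiff_distrib_right s t u

theorem _root_.LinearMap.exists_flip_eq_of_ker_le_ker {K V : Type*} [Field K] [AddCommGroup V]
    [Module K V] [FiniteDimensional K V] (Φ : V →ₗ[K] V →ₗ[K] K) (u : V →ₗ[K] K)
    (h : LinearMap.ker Φ ≤ LinearMap.ker u) : ∃ s, Φ.flip s = u := by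
  have hu : u ∈ (LinearMap.ker Φ).dualAnnihilator :=
    (Submodule.mem_dualAnnihilator u).2 fun w hw => h hw
  rw [← LinearMap.range_dualMap_eq_dualAnnihilator_ker] at hu
  obtain ⟨ξ, rfl⟩ := hu
  obtain ⟨s, rfl⟩ := (Module.evalEquiv K V).surjective ξ
  exact ⟨s, rfl⟩

theorem ind_empty {ι : Type*} [DecidableEq ι] : ind (∅ : Finset ι) = 0 := by
  funext q
  simp [ind]

theorem ind_symmDiff {ι : Type*} [DecidableEq ι] (a b : Finset ι) :
    ind (a ∆ b) = ind a + ind b := by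
  funext q
  by_cases ha : q ∈ a <;> by_cases hb : q ∈ b <;> simp [ind, mem_symmDiff, ha, hb]
  decide

theorem ind_inter {ι : Type*} [DecidableEq ι] (a b : Finset ι) :
    ind (a ∩ b) = ind a * ind b := by
  funext q
  by_cases ha : q ∈ a <;> by_cases hb : q ∈ b <;> simp [ind, ha, hb]

theorem sum_ind (s : Finset Q) : ∑ q, ind s q = #s := by
  simp [ind]

theorem ind_dotProduct_ind (a b : Finset Q) : ind a ⬝ᵥ ind b = #(a ∩ b) := by
  rw [← sum_ind, ind_inter]
  rfl

theorem natCast_card_symmDiff (a b : Finset Q) : (#(a ∆ b) : ZMod 2) = #a + #b := by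
  simp only [← sum_ind, ind_symmDiff, Pi.add_apply, sum_add_distrib]

theorem two_dvd_card_symmDiff_iff {a b : Finset Q} (ha : 2 ∣ #a) : 2 ∣ #(a ∆ b) ↔ 2 ∣ #b := by
  simp only [← ZMod.natCast_eq_zero_iff, natCast_card_symmDiff,
    (ZMod.natCast_eq_zero_iff _ _).2 ha, zero_add]

theorem IsSubgroup.symmDiff_mem_iff {ι : Type*} [DecidableEq ι] {S : Set (Finset ι)}
    (hS : IsSubgroup S) {a b : Finset ι} (ha : a ∈ S) : a ∆ b ∈ S ↔ b ∈ S :=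
  ⟨fun hab => symmDiff_symmDiff_cancel_left a b ▸ hS.2 a ha _ hab, hS.2 a ha b⟩

theorem subset_closure {ι : Type*} [DecidableEq ι] (T : Set (Finset ι)) : T ⊆ closure T :=
  fun _ hx _ hS => hS.2 hx

theorem closure_subset {ι : Type*} [DecidableEq ι] {S T : Set (Finset ι)} (hS : IsSubgroup S)
    (hT : T ⊆ S) : closure T ⊆ S :=
  fun _ hx => hx S ⟨hS, hT⟩

theorem isSubgroup_Zof (K : Set (Finset Q)) : IsSubgroup (Zof K) := by
  refine ⟨fun h _ => by simp, fun a ha b hb h hh => ?_⟩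
  rw [inter_symmDiff_distrib_right]
  exact (two_dvd_card_symmDiff_iff (ha h hh)).2 (hb h hh)

def indSubmodule {ι : Type*} [DecidableEq ι] (S : Set (Finset ι)) (hS : IsSubgroup S) :
    Submodule (ZMod 2) (ι → ZMod 2) where
  carrier := ind '' S
  add_mem' := by
    rintro _ _ ⟨a, ha, rfl⟩ ⟨b, hb, rfl⟩
    exact ⟨a ∆ b, hS.2 a ha b hb, ind_symmDiff a b⟩
  zero_mem' := ⟨∅, hS.1, ind_empty⟩
  smul_mem' c x hx := by
    obtain rfl | rfl : c = 0 ∨ c = 1 := by revert c; decide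
    · exact zero_smul (ZMod 2) x ▸ ⟨∅, hS.1, ind_empty⟩
    · exact (one_smul (ZMod 2) x).symm ▸ hx

section

variable {C : CSS Q}

theorem isSubgroup_ZX : IsSubgroup (ZX C) := isSubgroup_Zof C.SZ

theorem isSubgroup_ZZ : IsSubgroup (ZZ C) := isSubgroup_Zof C.SX

theorem SX_subset_ZX : C.SX ⊆ ZX C :=
  fun b hb f hf => inter_comm f b ▸ C.comm f hf b hb

theorem SZ_subset_ZZ : C.SZ ⊆ ZZ C := fun a ha c hc => C.comm a ha c hc

theorem exists_logicalX (hsingle : SingleQubit C) : ∃ l, LogicalX C l :=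
  Set.exists_of_ssubset (SX_subset_ZX.ssubset_of_ne hsingle.1.1.symm)

theorem exists_logicalZ (hsingle : SingleQubit C) : ∃ l, LogicalZ C l :=
  Set.exists_of_ssubset (SZ_subset_ZZ.ssubset_of_ne hsingle.2.1.symm)

theorem mem_SX_or_symmDiff_mem_SX (hsingle : SingleQubit C) {β₀ β : Finset Q}
    (hβ₀ : LogicalX C β₀) (hβ : β ∈ ZX C) : β ∈ C.SX ∨ β ∆ β₀ ∈ C.SX :=
  or_iff_not_imp_left.2 fun h => hsingle.1.2 β β₀ ⟨hβ, h⟩ hβ₀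

theorem inter_mem_ZZ (hinter : Inter C) {β γ : Finset Q} (hβ : β ∈ ZX C) (hγ : γ ∈ ZX C) :
    β ∩ γ ∈ ZZ C := by
  rw [hinter]
  exact ⟨β, hβ, γ, hγ, rfl⟩

theorem inter_mem_SZ_of_mem_SX (hdual : Dual C) (hinter : Inter C) {b γ : Finset Q}
    (hb : b ∈ C.SX) (hγ : γ ∈ ZX C) : b ∩ γ ∈ C.SZ := by
  rw [hdual.1]
  intro γ' hγ'
  rw [inter_assoc, inter_comm]
  exact inter_mem_ZZ hinter hγ hγ' b hb

theorem LogicalX.not_two_dvd_card_inter (hdual : Dual C) (hsingle : SingleQubit C)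
    {β z : Finset Q} (hβ : LogicalX C β) (hz : LogicalZ C z) : ¬ 2 ∣ #(β ∩ z) := by
  intro heven
  apply hβ.2
  rw [hdual.2]
  intro z' hz'
  by_cases hz'S : z' ∈ C.SZ
  · exact hβ.1 z' hz'S
  · have h := (two_dvd_card_symmDiff_iff heven).2 (hβ.1 _ (hsingle.2.2 z z' hz ⟨hz', hz'S⟩))
    rwa [← inter_symmDiff_distrib_left, symmDiff_symmDiff_cancel_left] at h

theorem LogicalZ.exists_eq_inter (hdual : Dual C) (hinter : Inter C) {z : Finset Q}
    (hz : LogicalZ C z) : ∃ γ γ', LogicalX C γ ∧ LogicalX C γ' ∧ z = γ ∩ γ' := by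
  obtain ⟨γ, hγ, γ', hγ', rfl⟩ := hinter.subset hz.1
  refine ⟨γ, γ', ⟨hγ, fun h => hz.2 (inter_mem_SZ_of_mem_SX hdual hinter h hγ')⟩,
    ⟨hγ', fun h => hz.2 ?_⟩, rfl⟩
  rw [inter_comm]
  exact inter_mem_SZ_of_mem_SX hdual hinter h hγ

theorem LogicalX.inter (hdual : Dual C) (hsingle : SingleQubit C) (hinter : Inter C)
    {β β' : Finset Q} (hβ : LogicalX C β) (hβ' : LogicalX C β') : LogicalZ C (β ∩ β') := by
  refine ⟨inter_mem_ZZ hinter hβ.1 hβ'.1, fun h => ?_⟩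
  obtain ⟨z, hz⟩ := exists_logicalZ hsingle
  obtain ⟨γ, γ', hγ, hγ', rfl⟩ := hz.exists_eq_inter hdual hinter
  apply hz.2
  -- `β ∩ β'` and `γ ∩ γ'` differ by `(β ∆ γ) ∩ β'` and `γ ∩ (β' ∆ γ')`
  have h₁ : (β ∩ β') ∆ (γ ∩ β') ∈ C.SZ := by
    rw [← inter_symmDiff_distrib_right]
    exact inter_mem_SZ_of_mem_SX hdual hinter (hsingle.1.2 β γ hβ hγ) hβ'.1
  have h₂ : (γ ∩ β') ∆ (γ ∩ γ') ∈ C.SZ := by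
    rw [← inter_symmDiff_distrib_left, inter_comm]
    exact inter_mem_SZ_of_mem_SX hdual hinter (hsingle.1.2 β' γ' hβ' hγ') hγ.1
  exact (C.hSZ.symmDiff_mem_iff ((C.hSZ.symmDiff_mem_iff h).1 h₁)).1 h₂

theorem inter_mem_SZ_of_inter_mem_ZZ (hdual : Dual C) (hsingle : SingleQubit C)
    (hinter : Inter C) {α b : Finset Q} (hb : b ∈ C.SX) (h : α ∩ b ∈ ZZ C) : α ∩ b ∈ C.SZ := by
  by_contra hS
  obtain ⟨γ, γ', hγ, -, heq⟩ := LogicalZ.exists_eq_inter hdual hinter ⟨h, hS⟩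
  -- `α ∩ b ⊆ b` and `α ∩ b ⊆ γ`, so both overlaps have the parity of `#(α ∩ b)`
  have heven := h b hb
  have hodd := hγ.not_two_dvd_card_inter hdual hsingle ⟨h, hS⟩
  rw [inter_assoc, inter_self, heq] at heven
  rw [heq, ← inter_assoc, inter_self] at hodd
  exact hodd heven

theorem inter_mem_G {α β : Finset Q} (hβ : β ∈ ZX C) : α ∩ β ∈ G C α :=
  subset_closure _ (Or.inr ⟨β, hβ, rfl⟩)

theorem exists_eq_symmDiff_inter_of_mem_G {α z : Finset Q} (hz : z ∈ G C α) :
    ∃ s ∈ C.SZ, ∃ β ∈ ZX C, z = s ∆ (α ∩ β) := by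
  refine closure_subset (S := {z | ∃ s ∈ C.SZ, ∃ β ∈ ZX C, z = s ∆ (α ∩ β)}) ⟨?_, ?_⟩ ?_ hz
  · exact ⟨∅, C.hSZ.1, ∅, isSubgroup_ZX.1, by simp⟩
  · rintro _ ⟨s, hs, β, hβ, rfl⟩ _ ⟨s', hs', β', hβ', rfl⟩
    refine ⟨s ∆ s', C.hSZ.2 s hs s' hs', β ∆ β', isSubgroup_ZX.2 β hβ β' hβ', ?_⟩
    rw [inter_symmDiff_distrib_left, symmDiff_symmDiff_symmDiff_comm]
  · rintro z (hz | ⟨β, hβ, rfl⟩)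
    · exact ⟨z, hz, ∅, isSubgroup_ZX.1, by rw [inter_empty]; exact (symmDiff_bot z).symm⟩
    · exact ⟨∅, C.hSZ.1, β, hβ, (bot_symmDiff _).symm⟩

theorem exists_logicalX_inter_mem_ZZ (hdual : Dual C) (hsingle : SingleQubit C)
    (hinter : Inter C) (α : Finset Q) : ∃ β, LogicalX C β ∧ α ∩ β ∈ ZZ C := by
  obtain ⟨γ, hγ⟩ := exists_logicalX hsingle
  let W := indSubmodule C.SX C.hSX
  let B : (Q → ZMod 2) →ₗ[ZMod 2] (Q → ZMod 2) →ₗ[ZMod 2] ZMod 2 :=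
    (dotProductBilin (ZMod 2) (ZMod 2)).comp (LinearMap.mulLeft (ZMod 2) (ind α))
  have hB (b c : Finset Q) : B (ind b) (ind c) = #(α ∩ b ∩ c) := by
    simp [B, ← ind_inter, ind_dotProduct_ind]
  -- We look for `σ ∈ S_X` with `#(α ∩ σ ∩ c) ≡ #(α ∩ γ ∩ c)` for all `c ∈ S_X`, a linear
  -- system that is solvable since the radical of `B` on `S_X` consists of stabilizers.
  obtain ⟨⟨_, σ, hσ, rfl⟩, hσγ⟩ := LinearMap.exists_flip_eq_of_ker_le_ker
    (B.compl₁₂ W.subtype W.subtype) ((B (ind γ)).comp W.subtype) <| by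
    rintro ⟨_, c, hc, rfl⟩ hker
    have hcZ : α ∩ c ∈ ZZ C := fun b hb => by
      rw [← ZMod.natCast_eq_zero_iff, ← hB]
      exact LinearMap.congr_fun (LinearMap.mem_ker.1 hker) ⟨ind b, b, hb, rfl⟩
    have hγc := hγ.1 _ (inter_mem_SZ_of_inter_mem_ZZ hdual hsingle hinter hc hcZ)
    rw [LinearMap.mem_ker]
    change B (ind γ) (ind c) = 0
    rwa [hB, ZMod.natCast_eq_zero_iff, inter_assoc, inter_left_comm]
  refine ⟨γ ∆ σ, ⟨isSubgroup_ZX.2 _ hγ.1 _ (SX_subset_ZX hσ), fun h => hγ.2 ?_⟩, fun c hc => ?_⟩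
  · exact (C.hSX.symmDiff_mem_iff hσ).1 (symmDiff_comm γ σ ▸ h)
  · have h := LinearMap.congr_fun hσγ ⟨ind c, c, hc, rfl⟩
    change B (ind c) (ind σ) = B (ind γ) (ind c) at h
    rw [hB, hB, inter_right_comm] at h
    rw [← ZMod.natCast_eq_zero_iff, inter_symmDiff_distrib_left, inter_symmDiff_distrib_right,
      natCast_card_symmDiff, ← h, CharTwo.add_self_eq_zero]

theorem tolerable_iff_inter_mem_SZ (hdual : Dual C) (hsingle : SingleQubit C) (hinter : Inter C)
    {α β₀ : Finset Q} (hβ₀ : LogicalX C β₀) (hα : α ∩ β₀ ∈ ZZ C) :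
    Tolerable C α ↔ α ∩ β₀ ∈ C.SZ := by
  refine ⟨fun h => by_contra fun h' => h _ (inter_mem_G hβ₀.1) ⟨hα, h'⟩, ?_⟩
  rintro h z hz ⟨hzZZ, hzSZ⟩
  obtain ⟨s, hs, β, hβ, rfl⟩ := exists_eq_symmDiff_inter_of_mem_G hz
  have hαβ : α ∩ β ∈ ZZ C := (isSubgroup_ZZ.symmDiff_mem_iff (SZ_subset_ZZ hs)).1 hzZZ
  refine hzSZ ((C.hSZ.symmDiff_mem_iff hs).2 ?_)
  rcases mem_SX_or_symmDiff_mem_SX hsingle hβ₀ hβ with hβS | hβS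
  · exact inter_mem_SZ_of_inter_mem_ZZ hdual hsingle hinter hβS hαβ
  · have h' := inter_mem_SZ_of_inter_mem_ZZ hdual hsingle hinter hβS
      (by rw [inter_symmDiff_distrib_left]; exact isSubgroup_ZZ.2 _ hαβ _ hα)
    rw [inter_symmDiff_distrib_left, symmDiff_comm] at h'
    exact (C.hSZ.symmDiff_mem_iff h).1 h'

theorem exists_tolerable_symmDiff_mem_ZX (hdual : Dual C) (hsingle : SingleQubit C)
    (hinter : Inter C) (α : Finset Q) : ∃ α', Tolerable C α' ∧ α ∆ α' ∈ ZX C := by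
  obtain ⟨β₀, hβ₀, hα⟩ := exists_logicalX_inter_mem_ZZ hdual hsingle hinter α
  by_cases h : α ∩ β₀ ∈ C.SZ
  · exact ⟨α, (tolerable_iff_inter_mem_SZ hdual hsingle hinter hβ₀ hα).2 h, by
      simpa using isSubgroup_ZX.1⟩
  -- `β₀ = β₀ ∩ β₀` is a logical `Z`, as is `α ∩ β₀`, so adding `β₀` to `α` cancels the latter
  have hβ₀Z : LogicalZ C β₀ := inter_self β₀ ▸ hβ₀.inter hdual hsingle hinter hβ₀
  have hZZ : (α ∆ β₀) ∩ β₀ ∈ ZZ C := by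
    rw [inter_symmDiff_distrib_right, inter_self]
    exact isSubgroup_ZZ.2 _ hα _ hβ₀Z.1
  refine ⟨α ∆ β₀, (tolerable_iff_inter_mem_SZ hdual hsingle hinter hβ₀ hZZ).2 ?_, ?_⟩
  · rw [inter_symmDiff_distrib_right, inter_self]
    exact hsingle.2.2 _ _ ⟨hα, h⟩ hβ₀Z
  · rw [symmDiff_symmDiff_cancel_left]
    exact hβ₀.1

theorem symmDiff_mem_SX_of_tolerable (hdual : Dual C) (hsingle : SingleQubit C)
    (hinter : Inter C) {α α' : Finset Q} (hα : Tolerable C α) (hα' : Tolerable C α')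
    (hδ : α ∆ α' ∈ ZX C) : α ∆ α' ∈ C.SX := by
  by_contra hδS
  obtain ⟨β₀, hβ₀, hαZ⟩ := exists_logicalX_inter_mem_ZZ hdual hsingle hinter α
  have hδZ : LogicalZ C ((α ∆ α') ∩ β₀) := LogicalX.inter hdual hsingle hinter ⟨hδ, hδS⟩ hβ₀
  have hα'eq : α' ∩ β₀ = (α ∩ β₀) ∆ ((α ∆ α') ∩ β₀) := by
    rw [← inter_symmDiff_distrib_right, symmDiff_symmDiff_cancel_left]
  have hα'Z : α' ∩ β₀ ∈ ZZ C := hα'eq ▸ isSubgroup_ZZ.2 _ hαZ _ hδZ.1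
  have hαS := (tolerable_iff_inter_mem_SZ hdual hsingle hinter hβ₀ hαZ).1 hα
  have hα'S := (tolerable_iff_inter_mem_SZ hdual hsingle hinter hβ₀ hα'Z).1 hα'
  exact hδZ.2 ((C.hSZ.symmDiff_mem_iff hαS).1 (hα'eq ▸ hα'S))

end

/-- For every `X`-error syndrome there exists exactly one class, up to stabilizers, of
tolerable errors with that syndrome; hence tolerable errors form a set of correctable
errors.  (Two finsets have equal syndromes iff their symmetric difference lies in
`Z_X(S)`.) -/
theorem tolerable_exists_unique_class
    (C : CSS Q) (hdual : Dual C) (hsingle : SingleQubit C) (hinter : Inter C) :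
    (∀ α : Finset Q, ∃ α' : Finset Q, Tolerable C α' ∧ α ∆ α' ∈ ZX C) ∧
    (∀ α α' : Finset Q, Tolerable C α → Tolerable C α' → α ∆ α' ∈ ZX C →
      α ∆ α' ∈ C.SX) :=
  ⟨exists_tolerable_symmDiff_mem_ZX hdual hsingle hinter,
    fun _ _ => symmDiff_mem_SX_of_tolerable hdual hsingle hinter⟩

end CC
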